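/- For every function π : s → t between finite sets, let D_π := ∐_{i ∈ t} Fin(–, π⁻¹(i)) be the associated Dirichlet functor. Then the map D_π(0!) : D_π(1) → D_π(0) induced by applying D_π to the unique function 0 → 1 is isomorphic, as an object of the arrow category of FintypeCat, to π itself. Conversely, every Dirichlet functor D is isomorphic to D_{π_D}, where π_D := D(0!) : D(1) → D(0). Hence isomorphism classes of Dirichlet functors correspond bijectively to isomorphism classes of functions between finite sets. -/

import Mathlib

/- STATEMENT 4: For every function `π : s → t` between finite sets, let
`D_π := ∐_{i ∈ t} Fin(–, π⁻¹(i))` be the associated Dirichlet functor. Then the map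
`D_π(0!) : D_π(1) → D_π(0)` is isomorphic, as an object of the arrow category of `FintypeCat`,
to `π` itself. Conversely, every Dirichlet functor `D` is isomorphic to `D_{π_D}` where
`π_D := D(0!) : D(1) → D(0)`. Hence isomorphism classes of Dirichlet functors correspond
bijectively to isomorphism classes of functions between finite sets. -/

open CategoryTheory CategoryTheory.Limits Opposite

noncomputable section

noncomputable instance (X Y : FintypeCat.{0}) : Fintype (X ⟶ Y) := by
  classical
  letI := @FintypeCat.fintype X
  letI := @FintypeCat.fintype Y
  exact Fintype.ofSurjective FintypeCat.homMk (fun f => ⟨f, by ext; rfl⟩)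

/-- The finite coproduct `∐ᵢ Fin(–, dᵢ)` of representable presheaves `FintypeCatᵒᵖ ⥤ FintypeCat`. -/
def dirichletSum {I : Type} [Fintype I] (d : I → FintypeCat.{0}) :
    FintypeCat.{0}ᵒᵖ ⥤ FintypeCat.{0} where
  obj X := FintypeCat.of (Σ i, (X.unop ⟶ d i))
  map f := FintypeCat.homMk fun x => ⟨x.1, f.unop ≫ x.2⟩

/-- A Dirichlet functor is a finite coproduct of representable presheaves. -/
def IsDirichlet (D : FintypeCat.{0}ᵒᵖ ⥤ FintypeCat.{0}) : Prop :=
  ∃ (I : Type) (_ : Fintype I) (d : I → FintypeCat.{0}), Nonempty (D ≅ dirichletSum d)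

/-- The empty finite set `0`. -/
abbrev X0 : FintypeCat.{0} := FintypeCat.of PEmpty

/-- A one-element finite set `1`. -/
abbrev X1 : FintypeCat.{0} := FintypeCat.of PUnit

/-- The unique function `0! : 0 → 1`. -/
def zeroToOne : X0 ⟶ X1 := FintypeCat.homMk fun x => x.elim

/-- The fiber `π⁻¹(i)` of a function `π : s → t` over `i ∈ t`, as a finite set. -/
noncomputable def fiber {s t : FintypeCat.{0}} (π : s ⟶ t) (i : t) : FintypeCat.{0} :=
  letI : DecidableEq t := Classical.decEq _
  FintypeCat.of {x : s // π x = i}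

/-- The Dirichlet functor `D_π = ∐_{i ∈ t} Fin(–, π⁻¹(i))` associated to `π : s → t`. -/
noncomputable def Dpi {s t : FintypeCat.{0}} (π : s ⟶ t) : FintypeCat.{0}ᵒᵖ ⥤ FintypeCat.{0} :=
  letI := @FintypeCat.fintype t
  dirichletSum (fun i : t => fiber π i)


/-! `∐ᵢ Fin(–, dᵢ)` takes the values `Σᵢ dᵢ` at `1` and `I` at `0`, and its value at `0!` is the
projection `Σᵢ dᵢ → I`. Conversely every `π : s → t` is isomorphic to the projection
`Σ_{i ∈ t} π⁻¹(i) → t`, whose fibers are the `π⁻¹(i)` again. As `D_π` only depends on `π` up to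
isomorphism of arrows, `D ↦ D(0!)` and `π ↦ D_π` are mutually inverse up to isomorphism. -/

section

variable {I I' : Type} [Fintype I] [Fintype I']

def dirichletSumIsoOfEquiv {d : I → FintypeCat.{0}} {d' : I' → FintypeCat.{0}} (σ : I ≃ I')
    (e : ∀ i, d i ≅ d' (σ i)) : dirichletSum d ≅ dirichletSum d' :=
  NatIso.ofComponents
    (fun X => FintypeCat.equivEquivIso
      (Equiv.sigmaCongr σ fun i => (Iso.refl X.unop).homCongr (e i)))
    (fun _ => rfl)

def homFromOneEquiv (Y : FintypeCat.{0}) : (X1 ⟶ Y) ≃ Y where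
  toFun f := f PUnit.unit
  invFun y := FintypeCat.homMk fun _ => y
  left_inv _ := FintypeCat.hom_ext _ _ fun _ => rfl
  right_inv _ := rfl

instance (Y : FintypeCat.{0}) : Unique (X0 ⟶ Y) where
  default := FintypeCat.homMk PEmpty.elim
  uniq _ := FintypeCat.hom_ext _ _ fun x => x.elim

def arrowIsoSigmaFst (d : I → FintypeCat.{0}) :
    Arrow.mk ((dirichletSum d).map zeroToOne.op) ≅
      Arrow.mk (FintypeCat.homMk (Sigma.fst : (Σ i, d i) → I) : FintypeCat.of _ ⟶ FintypeCat.of I) :=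
  Arrow.isoMk
    (FintypeCat.equivEquivIso (Equiv.sigmaCongrRight fun i => homFromOneEquiv (d i)))
    (FintypeCat.equivEquivIso (Equiv.sigmaUnique I fun i => X0 ⟶ d i))
    rfl

def arrowIsoSigmaFstFiber {s t : FintypeCat.{0}} (π : s ⟶ t) :
    Arrow.mk (FintypeCat.homMk (Sigma.fst : (Σ i, fiber π i) → t) :
      FintypeCat.of _ ⟶ t) ≅ Arrow.mk π :=
  Arrow.isoMk (FintypeCat.equivEquivIso (Equiv.sigmaFiberEquiv π)) (Iso.refl t)
    (FintypeCat.hom_ext _ _ fun x => x.2.2)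

def fiberEquivOfArrowIso {s t s' t' : FintypeCat.{0}} {π : s ⟶ t} {π' : s' ⟶ t'}
    (e : Arrow.mk π ≅ Arrow.mk π') (i : t) : fiber π i ≃ fiber π' (e.hom.right i) :=
  (FintypeCat.equivEquivIso.symm (Arrow.leftFunc.mapIso e)).subtypeEquiv fun x => by
    have hw : π' (e.hom.left x) = e.hom.right (π x) := ConcreteCategory.congr_hom e.hom.w x
    change _ ↔ π' (e.hom.left x) = _
    rw [hw, (ConcreteCategory.bijective_of_isIso e.hom.right).1.eq_iff]

def dpiIsoOfArrowIso {s t s' t' : FintypeCat.{0}} {π : s ⟶ t} {π' : s' ⟶ t'}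
    (e : Arrow.mk π ≅ Arrow.mk π') : Dpi π ≅ Dpi π' :=
  letI := @FintypeCat.fintype t
  letI := @FintypeCat.fintype t'
  dirichletSumIsoOfEquiv (FintypeCat.equivEquivIso.symm (Arrow.rightFunc.mapIso e))
    fun i => FintypeCat.equivEquivIso (fiberEquivOfArrowIso e i)

def dirichletSumIsoDpiSigmaFst (d : I → FintypeCat.{0}) :
    dirichletSum d ≅
      Dpi (FintypeCat.homMk (Sigma.fst : (Σ i, d i) → I) : FintypeCat.of _ ⟶ FintypeCat.of I) :=
  -- `Dpi` indexes its summands by `FintypeCat.of I` with the instance `FintypeCat.fintype`.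
  @dirichletSumIsoOfEquiv _ _ _ FintypeCat.fintype _ _ (Equiv.refl I)
    fun i => FintypeCat.equivEquivIso (Equiv.sigmaSubtype (β := fun i => d i) i).symm

def dpiMapZeroToOneIso {s t : FintypeCat.{0}} (π : s ⟶ t) :
    Arrow.mk ((Dpi π).map zeroToOne.op) ≅ Arrow.mk π :=
  letI := @FintypeCat.fintype t
  arrowIsoSigmaFst (fiber π) ≪≫ arrowIsoSigmaFstFiber π

def dirichletSumIsoDpi (d : I → FintypeCat.{0}) :
    dirichletSum d ≅ Dpi ((dirichletSum d).map zeroToOne.op) :=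
  dirichletSumIsoDpiSigmaFst d ≪≫ dpiIsoOfArrowIso (arrowIsoSigmaFst d).symm

end

theorem nonempty_iso_dpi_of_isDirichlet {D : FintypeCat.{0}ᵒᵖ ⥤ FintypeCat.{0}}
    (h : IsDirichlet D) : Nonempty (D ≅ Dpi (D.map zeroToOne.op)) := by
  obtain ⟨I, _, d, ⟨φ⟩⟩ := h
  exact ⟨φ ≪≫ dirichletSumIsoDpi d ≪≫
    dpiIsoOfArrowIso (Arrow.isoOfNatIso φ.symm (Arrow.mk zeroToOne.op))⟩

theorem isDirichlet_dpi {s t : FintypeCat.{0}} (π : s ⟶ t) : IsDirichlet (Dpi π) :=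
  ⟨t, FintypeCat.fintype, fiber π, ⟨Iso.refl _⟩⟩

def skeletonDirichletEquivSkeletonArrow :
    Skeleton (ObjectProperty.FullSubcategory IsDirichlet) ≃ Skeleton (Arrow FintypeCat.{0}) where
  toFun := Quotient.map (fun D => Arrow.mk (D.obj.map zeroToOne.op))
    fun _ _ ⟨φ⟩ => ⟨Arrow.isoOfNatIso ((ObjectProperty.ι IsDirichlet).mapIso φ)
      (Arrow.mk zeroToOne.op)⟩
  invFun := Quotient.map (fun f => ⟨Dpi f.hom, isDirichlet_dpi f.hom⟩)
    fun _ _ ⟨e⟩ => ⟨ObjectProperty.isoMk _ (dpiIsoOfArrowIso e)⟩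
  left_inv := Quotient.ind fun D => Quotient.sound <|
    (nonempty_iso_dpi_of_isDirichlet D.property).map fun φ => ObjectProperty.isoMk _ φ.symm
  right_inv := Quotient.ind fun f => Quotient.sound ⟨dpiMapZeroToOneIso f.hom⟩

theorem dirichlet_equiv_bundles :
    (∀ (s t : FintypeCat.{0}) (π : s ⟶ t),
      Nonempty (Arrow.mk ((Dpi π).map zeroToOne.op) ≅ Arrow.mk π)) ∧
    (∀ D : FintypeCat.{0}ᵒᵖ ⥤ FintypeCat.{0}, IsDirichlet D →
      Nonempty (D ≅ Dpi (D.map zeroToOne.op))) ∧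
    Nonempty (Skeleton (ObjectProperty.FullSubcategory IsDirichlet) ≃ Skeleton (Arrow FintypeCat.{0})) :=
  ⟨fun _ _ π => ⟨dpiMapZeroToOneIso π⟩, fun _ => nonempty_iso_dpi_of_isDirichlet,
    ⟨skeletonDirichletEquivSkeletonArrow⟩⟩
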